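/- arXiv:0803.1978 — 4 statements merged into one kernel-verified Lean document; each statement's English description precedes it below -/
import Mathlib

section
/- Let V be a real Hilbert space, let A : V → V be a continuous linear operator that is coercive (⟪A u, u⟫ ≥ m‖u‖² for some m > 0 and all u ∈ V), and let B : V → V be a monotone map (⟪B x − B y, x − y⟫ ≥ 0 for all x, y) that is Lipschitz continuous with some constant L ≥ 0. Then for every f ∈ V and every φ ∈ V there exists a unique y ∈ V such that A y + B(y − φ) = f. (Abstract well-posedness of the penalized semilinear equation (3.2).) -/
/-!
The map `F y := A y + B (y - φ)` is strongly monotone with constant `m` (coercivity of `A` plus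
monotonicity of `B`) and Lipschitz with constant `‖A‖ + L`. For such a map (Zarantonello), strong
monotonicity gives injectivity at once, and for `ρ := m / K²` the map `y ↦ y - ρ (F y - f)` is a
contraction with constant `√(1 - m² / K²)`, since
`‖e - ρ g‖² = ‖e‖² - 2ρ⟪g, e⟫ + ρ²‖g‖² ≤ (1 - 2ρm + ρ²K²)‖e‖²`; its fixed point solves `F y = f`.
-/

open RealInnerProductSpace

section StronglyMonotone

variable {V : Type*} [NormedAddCommGroup V] [InnerProductSpace ℝ V]

theorem norm_sub_smul_sq_le {e g : V} {m K ρ : ℝ} (hρ : 0 ≤ ρ)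
    (hge : m * ‖e‖ ^ 2 ≤ ⟪g, e⟫) (hg : ‖g‖ ≤ K * ‖e‖) :
    ‖e - ρ • g‖ ^ 2 ≤ (1 - 2 * ρ * m + ρ ^ 2 * K ^ 2) * ‖e‖ ^ 2 := by
  have hg2 : ‖g‖ ^ 2 ≤ (K * ‖e‖) ^ 2 := pow_le_pow_left₀ (norm_nonneg g) hg 2
  calc ‖e - ρ • g‖ ^ 2 = ‖e‖ ^ 2 - 2 * ρ * ⟪g, e⟫ + ρ ^ 2 * ‖g‖ ^ 2 := by
        rw [norm_sub_sq_real, real_inner_smul_right, norm_smul, real_inner_comm,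
          Real.norm_of_nonneg hρ]
        ring
    _ ≤ _ := by
        nlinarith [mul_le_mul_of_nonneg_left hge hρ, mul_le_mul_of_nonneg_left hg2 (sq_nonneg ρ)]

variable {F : V → V} {m K : ℝ}

theorem injective_of_strongly_monotone (hm : 0 < m)
    (hF : ∀ x y, m * ‖x - y‖ ^ 2 ≤ ⟪F x - F y, x - y⟫) : Function.Injective F := by
  intro x y hxy
  have h := hF x y
  rw [hxy, sub_self, inner_zero_left] at h
  have : ‖x - y‖ ^ 2 ≤ 0 := by nlinarith
  simpa [sub_eq_zero] using this

theorem contractingWith_sub_smul_sub (hm : 0 < m) (hmK : m ≤ K)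
    (hF : ∀ x y, m * ‖x - y‖ ^ 2 ≤ ⟪F x - F y, x - y⟫)
    (hK : ∀ x y, ‖F x - F y‖ ≤ K * ‖x - y‖) (f : V) :
    ContractingWith ⟨√(1 - m ^ 2 / K ^ 2), Real.sqrt_nonneg _⟩
      (fun y => y - (m / K ^ 2) • (F y - f)) := by
  have hK0 : 0 < K := hm.trans_le hmK
  have hq : 0 ≤ 1 - m ^ 2 / K ^ 2 := by
    rw [sub_nonneg, div_le_one (by positivity)]
    exact pow_le_pow_left₀ hm.le hmK 2
  refine ⟨?_, LipschitzWith.of_dist_le_mul fun x y => ?_⟩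
  · change √(1 - m ^ 2 / K ^ 2) < 1
    rw [Real.sqrt_lt' one_pos, one_pow]
    have : 0 < m ^ 2 / K ^ 2 := by positivity
    linarith
  change _ ≤ √(1 - m ^ 2 / K ^ 2) * _
  rw [dist_eq_norm, dist_eq_norm]
  have hstep : (x - (m / K ^ 2) • (F x - f)) - (y - (m / K ^ 2) • (F y - f))
      = (x - y) - (m / K ^ 2) • (F x - F y) := by
    rw [smul_sub, smul_sub, smul_sub]; abel
  have hcoef : 1 - 2 * (m / K ^ 2) * m + (m / K ^ 2) ^ 2 * K ^ 2 = 1 - m ^ 2 / K ^ 2 := by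
    field_simp; ring
  have hsq := norm_sub_smul_sq_le (ρ := m / K ^ 2) (by positivity) (hF x y) (hK x y)
  rw [hcoef] at hsq
  calc _ = ‖(x - y) - (m / K ^ 2) • (F x - F y)‖ := by rw [hstep]
    _ ≤ √((1 - m ^ 2 / K ^ 2) * ‖x - y‖ ^ 2) := Real.le_sqrt_of_sq_le hsq
    _ = _ := by rw [Real.sqrt_mul hq, Real.sqrt_sq (norm_nonneg _)]

theorem existsUnique_apply_eq_of_strongly_monotone [CompleteSpace V] (hm : 0 < m)
    (hF : ∀ x y, m * ‖x - y‖ ^ 2 ≤ ⟪F x - F y, x - y⟫)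
    (hK : ∀ x y, ‖F x - F y‖ ≤ K * ‖x - y‖) (f : V) : ∃! y, F y = f := by
  -- the contraction argument needs `m ≤ K`, and enlarging `K` is free
  set K' := max K m
  have hK' : ∀ x y, ‖F x - F y‖ ≤ K' * ‖x - y‖ := fun x y =>
    (hK x y).trans (mul_le_mul_of_nonneg_right (le_max_left K m) (norm_nonneg _))
  obtain ⟨y, hy, -⟩ :=
    (contractingWith_sub_smul_sub hm (le_max_right K m) hF hK' f).exists_fixedPoint 0
      (edist_ne_top _ _)
  have hρ : (m / K' ^ 2) • (F y - f) = 0 := sub_eq_self.mp hy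
  have hFy : F y = f := sub_eq_zero.mp ((smul_eq_zero.mp hρ).resolve_left (by positivity))
  exact ⟨y, hFy, fun z hz => injective_of_strongly_monotone hm hF (hz.trans hFy.symm)⟩

end StronglyMonotone

theorem penalized_equation_wellposed_general
    {V : Type*} [NormedAddCommGroup V] [InnerProductSpace ℝ V] [CompleteSpace V]
    (A : V →L[ℝ] V)
    (m : ℝ) (hm : 0 < m) (hcoer : ∀ u : V, (inner ℝ (A u) u : ℝ) ≥ m * ‖u‖ ^ 2)
    (B : V → V)
    (hmono : ∀ x y : V, (inner ℝ (B x - B y) (x - y) : ℝ) ≥ 0)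
    (L : ℝ) (hlip : ∀ x y : V, ‖B x - B y‖ ≤ L * ‖x - y‖) :
    ∀ f φ : V, ∃! y : V, A y + B (y - φ) = f := by
  intro f φ
  have hsplit : ∀ x y, (A x + B (x - φ)) - (A y + B (y - φ))
      = A (x - y) + (B (x - φ) - B (y - φ)) := fun x y => by rw [map_sub]; abel
  refine existsUnique_apply_eq_of_strongly_monotone (K := ‖A‖ + L) hm (fun x y => ?_)
    (fun x y => ?_) f
  · have hB := hmono (x - φ) (y - φ)
    rw [sub_sub_sub_cancel_right] at hB
    rw [hsplit, inner_add_left]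
    linarith [hcoer (x - y)]
  · have hB := hlip (x - φ) (y - φ)
    rw [sub_sub_sub_cancel_right] at hB
    rw [hsplit, add_mul]
    exact norm_add_le_of_le (A.le_opNorm _) hB

/-- Well-posedness of the penalized semilinear equation `A y + B (y - φ) = f`:
`A` continuous linear and coercive, `B` monotone and Lipschitz. -/
theorem penalized_equation_wellposed
    {V : Type*} [NormedAddCommGroup V] [InnerProductSpace ℝ V] [CompleteSpace V]
    (A : V →L[ℝ] V)
    (m : ℝ) (hm : 0 < m) (hcoer : ∀ u : V, (inner ℝ (A u) u : ℝ) ≥ m * ‖u‖ ^ 2)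
    (B : V → V)
    (hmono : ∀ x y : V, (inner ℝ (B x - B y) (x - y) : ℝ) ≥ 0)
    (L : ℝ) (hL : 0 ≤ L) (hlip : ∀ x y : V, ‖B x - B y‖ ≤ L * ‖x - y‖) :
    ∀ f φ : V, ∃! y : V, A y + B (y - φ) = f :=
  penalized_equation_wellposed_general A m hm hcoer B hmono L hlip
end

section
/- Let V be a real Hilbert space, let a : V × V → ℝ be a continuous bilinear form that is coercive with constant m > 0 (a(u,u) ≥ m‖u‖² for all u), let δ > 0, and let B : V → V be a monotone map that is Lipschitz continuous with constant 1/δ. Fix f ∈ V. If y₁, y₂, φ₁, φ₂ ∈ V satisfy a(yᵢ, v) + ⟪B(yᵢ − φᵢ), v⟫ = ⟪f, v⟫ for all v ∈ V (i = 1, 2), then ‖y₂ − y₁‖ ≤ max{1, 2/(m δ)} ‖φ₂ − φ₁‖. (Theorem 3.1: Lipschitz dependence of the penalized state on the obstacle, with constant L_δ = max{1, 2/(mδ)}.) -/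
/-!
Subtracting the two state equations and testing with `e = y₂ - y₁` gives
`a(e, e) = -⟪B x₂ - B x₁, e⟫` with `xᵢ = yᵢ - φᵢ`. Since `e = (x₂ - x₁) + (φ₂ - φ₁)`, monotonicity
of `B` discards the first part and the Lipschitz bound controls the second, so that
`m ‖e‖² ≤ δ⁻¹ (‖e‖ + ‖φ₂ - φ₁‖) ‖φ₂ - φ₁‖`. Solving this quadratic inequality for `‖e‖` gives the
constant `max {1, 2/(mδ)}`.
-/

open scoped RealInnerProductSpace

section

variable {V : Type*} [NormedAddCommGroup V] [InnerProductSpace ℝ V]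

theorem LinearMap.apply_sub_eq_neg_inner_sub (a : V →ₗ[ℝ] V →ₗ[ℝ] ℝ) {f g₁ g₂ y₁ y₂ : V}
    (h₁ : ∀ v, a y₁ v + ⟪g₁, v⟫ = ⟪f, v⟫) (h₂ : ∀ v, a y₂ v + ⟪g₂, v⟫ = ⟪f, v⟫) (v : V) :
    a (y₂ - y₁) v = -⟪g₂ - g₁, v⟫ := by
  rw [map_sub, LinearMap.sub_apply, inner_sub_left]
  linarith [h₁ v, h₂ v]

theorem neg_inner_add_le_of_inner_nonneg {b d ψ : V} {K : ℝ} (hmono : 0 ≤ ⟪b, d⟫)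
    (hlip : ‖b‖ ≤ K * ‖d‖) : -⟪b, d + ψ⟫ ≤ K * ‖d‖ * ‖ψ‖ := by
  have hψ : -(‖b‖ * ‖ψ‖) ≤ ⟪b, ψ⟫ := neg_le_of_abs_le (abs_real_inner_le_norm b ψ)
  rw [inner_add_right]
  linarith [mul_le_mul_of_nonneg_right hlip (norm_nonneg ψ)]

end

theorem le_max_one_div_mul_of_mul_sq_le {c s t : ℝ} (hc : 0 < c) (hs : 0 ≤ s)
    (h : c * t ^ 2 ≤ (t + s) * s) : t ≤ max 1 (2 / c) * s := by
  rcases le_or_gt t s with hts | hst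
  · exact hts.trans (le_mul_of_one_le_left hs (le_max_left _ _))
  · have ht : 0 < t := hs.trans_lt hst
    have hct : c * t ≤ 2 * s := by nlinarith
    calc t ≤ 2 / c * s := by rw [div_mul_eq_mul_div, le_div_iff₀ hc]; linarith
      _ ≤ max 1 (2 / c) * s := mul_le_mul_of_nonneg_right (le_max_right _ _) hs

theorem penalized_state_lipschitz_in_obstacle_general
    {V : Type*} [NormedAddCommGroup V] [InnerProductSpace ℝ V]
    (a : V →ₗ[ℝ] V →ₗ[ℝ] ℝ)
    (m : ℝ) (hm : 0 < m) (hcoer : ∀ u : V, a u u ≥ m * ‖u‖ ^ 2)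
    (δ : ℝ) (hδ : 0 < δ)
    (B : V → V)
    (hmono : ∀ x y : V, (inner ℝ (B x - B y) (x - y) : ℝ) ≥ 0)
    (hlip : ∀ x y : V, ‖B x - B y‖ ≤ (1 / δ) * ‖x - y‖)
    (f : V) (y₁ y₂ φ₁ φ₂ : V)
    (h1 : ∀ v : V, a y₁ v + (inner ℝ (B (y₁ - φ₁)) v : ℝ) = (inner ℝ f v : ℝ))
    (h2 : ∀ v : V, a y₂ v + (inner ℝ (B (y₂ - φ₂)) v : ℝ) = (inner ℝ f v : ℝ)) :
    ‖y₂ - y₁‖ ≤ max 1 (2 / (m * δ)) * ‖φ₂ - φ₁‖ := by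
  set e := y₂ - y₁
  set ψ := φ₂ - φ₁
  set d := y₂ - φ₂ - (y₁ - φ₁)
  have hsplit : e = d + ψ := by simp only [e, d, ψ]; abel
  have hd : ‖d‖ ≤ ‖e‖ + ‖ψ‖ := by
    simpa only [hsplit, add_sub_cancel_right] using norm_sub_le e ψ
  have henergy : m * ‖e‖ ^ 2 ≤ δ⁻¹ * (‖e‖ + ‖ψ‖) * ‖ψ‖ :=
    calc m * ‖e‖ ^ 2 ≤ a e e := hcoer e
      _ = -⟪B (y₂ - φ₂) - B (y₁ - φ₁), d + ψ⟫ := by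
        rw [← hsplit]; exact a.apply_sub_eq_neg_inner_sub h1 h2 e
      _ ≤ δ⁻¹ * ‖d‖ * ‖ψ‖ :=
        neg_inner_add_le_of_inner_nonneg (hmono _ _) (by simpa only [one_div] using hlip _ _)
      _ ≤ δ⁻¹ * (‖e‖ + ‖ψ‖) * ‖ψ‖ := by gcongr
  refine le_max_one_div_mul_of_mul_sq_le (mul_pos hm hδ) (norm_nonneg ψ) ?_
  calc m * δ * ‖e‖ ^ 2 = δ * (m * ‖e‖ ^ 2) := by ring
    _ ≤ δ * (δ⁻¹ * (‖e‖ + ‖ψ‖) * ‖ψ‖) := mul_le_mul_of_nonneg_left henergy hδ.le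
    _ = (‖e‖ + ‖ψ‖) * ‖ψ‖ := by field_simp

/-- Theorem 3.1: Lipschitz dependence of the penalized state on the obstacle,
with constant `L_δ = max {1, 2/(m δ)}`. -/
theorem penalized_state_lipschitz_in_obstacle
    {V : Type*} [NormedAddCommGroup V] [InnerProductSpace ℝ V] [CompleteSpace V]
    (a : V →ₗ[ℝ] V →ₗ[ℝ] ℝ)
    (M : ℝ) (hM : 0 < M) (hcont : ∀ u v : V, |a u v| ≤ M * ‖u‖ * ‖v‖)
    (m : ℝ) (hm : 0 < m) (hcoer : ∀ u : V, a u u ≥ m * ‖u‖ ^ 2)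
    (δ : ℝ) (hδ : 0 < δ)
    (B : V → V)
    (hmono : ∀ x y : V, (inner ℝ (B x - B y) (x - y) : ℝ) ≥ 0)
    (hlip : ∀ x y : V, ‖B x - B y‖ ≤ (1 / δ) * ‖x - y‖)
    (f : V) (y₁ y₂ φ₁ φ₂ : V)
    (h1 : ∀ v : V, a y₁ v + (inner ℝ (B (y₁ - φ₁)) v : ℝ) = (inner ℝ f v : ℝ))
    (h2 : ∀ v : V, a y₂ v + (inner ℝ (B (y₂ - φ₂)) v : ℝ) = (inner ℝ f v : ℝ)) :
    ‖y₂ - y₁‖ ≤ max 1 (2 / (m * δ)) * ‖φ₂ - φ₁‖ :=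
  penalized_state_lipschitz_in_obstacle_general a m hm hcoer δ hδ B hmono hlip f y₁ y₂ φ₁ φ₂ h1 h2
end

section
/- Let V be a real Hilbert space, let a : V × V → ℝ be a bilinear form that is continuous with constant M > 0 (|a(u,v)| ≤ M‖u‖‖v‖) and coercive with constant m > 0 (a(u,u) ≥ m‖u‖²), and let B : V → V be a monotone map with B(0) = 0. If f, φ ∈ V and y ∈ V satisfies a(y, v) + ⟪B(y − φ), v⟫ = ⟪f, v⟫ for all v ∈ V, then ‖y‖ ≤ max{1, (M + 2)/m} (‖φ‖ + ‖f‖). (Abstract form of the a priori estimate (3.3): the penalized states are bounded in terms of the obstacle and the source term, uniformly in the penalization parameter.) -/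
/-!
Testing the equation with `v = y - φ` and dropping the nonnegative term `⟪B (y - φ), y - φ⟫`
(monotonicity against `B 0 = 0`) gives, by coercivity and continuity of `a`,
`m ‖y‖² ≤ M ‖y‖ ‖φ‖ + ‖f‖ (‖y‖ + ‖φ‖)`. If `‖y‖ > ‖φ‖ + ‖f‖`, the right-hand side is at most
`(M + 2) ‖y‖ (‖φ‖ + ‖f‖)`, and dividing by `m ‖y‖` gives the bound.
-/

open scoped RealInnerProductSpace

lemma inner_apply_self_nonneg_of_monotone {V : Type*} [NormedAddCommGroup V]
    [InnerProductSpace ℝ V] {B : V → V} (hmono : ∀ x y : V, 0 ≤ ⟪B x - B y, x - y⟫)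
    (hB0 : B 0 = 0) (x : V) : 0 ≤ ⟪B x, x⟫ := by
  simpa [hB0] using hmono x 0

lemma coercive_sq_le_of_inner_nonneg {V : Type*} [NormedAddCommGroup V]
    [InnerProductSpace ℝ V] (a : V →ₗ[ℝ] V →ₗ[ℝ] ℝ) {M m : ℝ}
    (hcont : ∀ u v : V, |a u v| ≤ M * ‖u‖ * ‖v‖) (hcoer : ∀ u : V, m * ‖u‖ ^ 2 ≤ a u u)
    {b f φ y : V} (hb : 0 ≤ ⟪b, y - φ⟫) (hy : ∀ v : V, a y v + ⟪b, v⟫ = ⟪f, v⟫) :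
    m * ‖y‖ ^ 2 ≤ M * ‖y‖ * ‖φ‖ + ‖f‖ * (‖y‖ + ‖φ‖) := by
  have h_split : a y y = a y (y - φ) + a y φ := by simp
  have h_test : a y (y - φ) ≤ ‖f‖ * ‖y - φ‖ := by
    linarith [hy (y - φ), real_inner_le_norm f (y - φ)]
  have h_cont : a y φ ≤ M * ‖y‖ * ‖φ‖ := (abs_le.mp (hcont y φ)).2
  have h_tri : ‖f‖ * ‖y - φ‖ ≤ ‖f‖ * (‖y‖ + ‖φ‖) :=
    mul_le_mul_of_nonneg_left (norm_sub_le y φ) (norm_nonneg f)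
  linarith [hcoer y]

lemma le_max_mul_of_sq_le {M m t p F : ℝ} (hM : 0 ≤ M) (hm : 0 < m) (ht : 0 ≤ t)
    (hp : 0 ≤ p) (hF : 0 ≤ F) (h : m * t ^ 2 ≤ M * t * p + F * (t + p)) :
    t ≤ max 1 ((M + 2) / m) * (p + F) := by
  rcases le_or_gt t (p + F) with h_small | h_large
  · exact h_small.trans (le_mul_of_one_le_left (by positivity) (le_max_left _ _))
  have ht_pos : 0 < t := (add_nonneg hp hF).trans_lt h_large
  have h_rhs : M * t * p + F * (t + p) ≤ (M + 2) * (p + F) * t := by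
    have hpt : F * p ≤ F * t := mul_le_mul_of_nonneg_left (by linarith) hF
    nlinarith [mul_nonneg (mul_nonneg hM ht) hF, mul_nonneg hp ht]
  have h_lin : m * t ≤ (M + 2) * (p + F) :=
    le_of_mul_le_mul_right (by rw [mul_assoc, ← sq]; linarith) ht_pos
  calc t ≤ (M + 2) / m * (p + F) := by rw [div_mul_eq_mul_div, le_div_iff₀ hm]; linarith
    _ ≤ max 1 ((M + 2) / m) * (p + F) :=
      mul_le_mul_of_nonneg_right (le_max_right _ _) (by positivity)

theorem penalized_state_apriori_bound_general
    {V : Type*} [NormedAddCommGroup V] [InnerProductSpace ℝ V]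
    (a : V →ₗ[ℝ] V →ₗ[ℝ] ℝ)
    (M : ℝ) (hM : 0 < M) (hcont : ∀ u v : V, |a u v| ≤ M * ‖u‖ * ‖v‖)
    (m : ℝ) (hm : 0 < m) (hcoer : ∀ u : V, a u u ≥ m * ‖u‖ ^ 2)
    (B : V → V)
    (hmono : ∀ x y : V, (inner ℝ (B x - B y) (x - y) : ℝ) ≥ 0)
    (hB0 : B 0 = 0)
    (f φ y : V)
    (hy : ∀ v : V, a y v + (inner ℝ (B (y - φ)) v : ℝ) = (inner ℝ f v : ℝ)) :
    ‖y‖ ≤ max 1 ((M + 2) / m) * (‖φ‖ + ‖f‖) :=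
  le_max_mul_of_sq_le hM.le hm (norm_nonneg y) (norm_nonneg φ) (norm_nonneg f)
    (coercive_sq_le_of_inner_nonneg a hcont hcoer
      (inner_apply_self_nonneg_of_monotone hmono hB0 (y - φ)) hy)

/-- Abstract form of the a priori estimate (3.3): the penalized state is bounded
in terms of the obstacle and the source term, uniformly in the penalization. -/
theorem penalized_state_apriori_bound
    {V : Type*} [NormedAddCommGroup V] [InnerProductSpace ℝ V] [CompleteSpace V]
    (a : V →ₗ[ℝ] V →ₗ[ℝ] ℝ)
    (M : ℝ) (hM : 0 < M) (hcont : ∀ u v : V, |a u v| ≤ M * ‖u‖ * ‖v‖)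
    (m : ℝ) (hm : 0 < m) (hcoer : ∀ u : V, a u u ≥ m * ‖u‖ ^ 2)
    (B : V → V)
    (hmono : ∀ x y : V, (inner ℝ (B x - B y) (x - y) : ℝ) ≥ 0)
    (hB0 : B 0 = 0)
    (f φ y : V)
    (hy : ∀ v : V, a y v + (inner ℝ (B (y - φ)) v : ℝ) = (inner ℝ f v : ℝ)) :
    ‖y‖ ≤ max 1 ((M + 2) / m) * (‖φ‖ + ‖f‖) :=
  penalized_state_apriori_bound_general a M hM hcont m hm hcoer B hmono hB0 f φ y hy
end

section
/- Let V be a real Hilbert space, let a : V × V → ℝ be a continuous bilinear form that is coercive (a(u,u) ≥ m‖u‖² for some m > 0), and let f ∈ V. Suppose (y_k) converges weakly to y in V, (v_k) converges strongly (in norm) to v in V, and for every k one has a(y_k, v_k − y_k) ≥ ⟪f, v_k − y_k⟫. Then a(y, v − y) ≥ ⟪f, v − y⟫. (Abstract Minty-type passage to the limit in the variational inequality, the key step in the proofs of Theorems 3.2 and 3.3.) -/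
/-!
Coercivity makes `u ↦ a u u` weakly lower semicontinuous: `a (y k) (y k) ≥ a (y k) y + a y (y k) - a y y`,
and the right side tends to `a y y`. On the other hand `a (y k) (v k)` converges to `a y v` because `y k`
converges weakly and is bounded (uniform boundedness) while `v k` converges strongly. Passing to the limit in
`a (y k) (y k) + ⟪f, v k - y k⟫ ≤ a (y k) (v k)` gives `a y y + ⟪f, v - y⟫ ≤ a y v`.
-/

open Filter Topology

theorem exists_norm_le_of_forall_tendsto_dual {𝕜 E : Type*} [RCLike 𝕜] [NormedAddCommGroup E]
    [NormedSpace 𝕜 E] {y : ℕ → E} {ylim : E}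
    (hweak : ∀ φ : StrongDual 𝕜 E, Tendsto (fun k => φ (y k)) atTop (𝓝 (φ ylim))) :
    ∃ C, ∀ k, ‖y k‖ ≤ C := by
  have hpointwise : ∀ φ : StrongDual 𝕜 E, ∃ C, ∀ k,
      ‖NormedSpace.inclusionInDoubleDualLi 𝕜 (y k) φ‖ ≤ C := fun φ =>
    let ⟨C, hC⟩ := (hweak φ).norm.bddAbove_range
    ⟨C, fun k => hC ⟨k, rfl⟩⟩
  obtain ⟨C, hC⟩ := banach_steinhaus hpointwise
  exact ⟨C, fun k => (LinearIsometry.norm_map _ (y k)).symm.le.trans (hC k)⟩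

theorem tendsto_dual_of_forall_tendsto_inner {V : Type*} [NormedAddCommGroup V]
    [InnerProductSpace ℝ V] [CompleteSpace V] {ι : Type*} {l : Filter ι} {y : ι → V} {ylim : V}
    (hweak : ∀ z : V, Tendsto (fun k => (inner ℝ (y k) z : ℝ)) l (𝓝 (inner ℝ ylim z : ℝ)))
    (φ : StrongDual ℝ V) : Tendsto (fun k => φ (y k)) l (𝓝 (φ ylim)) := by
  have hφ : ∀ x : V, φ x = inner ℝ x ((InnerProductSpace.toDual ℝ V).symm φ) := fun x => by
    rw [real_inner_comm, InnerProductSpace.toDual_symm_apply]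
  simpa only [hφ] using hweak _

theorem ContinuousLinearMap.tendsto_apply₂_of_weak_of_strong {𝕜 E F : Type*}
    [NontriviallyNormedField 𝕜] [NormedAddCommGroup E] [NormedSpace 𝕜 E] [NormedAddCommGroup F]
    [NormedSpace 𝕜 F] (B : E →L[𝕜] F →L[𝕜] 𝕜) {ι : Type*} {l : Filter ι}
    {y : ι → E} {ylim : E} {v : ι → F} {vlim : F}
    (hweak : ∀ φ : StrongDual 𝕜 E, Tendsto (fun k => φ (y k)) l (𝓝 (φ ylim)))
    {C : ℝ} (hbdd : ∀ k, ‖y k‖ ≤ C) (hv : Tendsto v l (𝓝 vlim)) :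
    Tendsto (fun k => B (y k) (v k)) l (𝓝 (B ylim vlim)) := by
  have hfixed : Tendsto (fun k => B (y k) vlim) l (𝓝 (B ylim vlim)) := hweak (B.flip vlim)
  have hsmall : Tendsto (fun k => B (y k) (v k - vlim)) l (𝓝 0) := by
    have hbound : ∀ k, ‖B (y k) (v k - vlim)‖ ≤ ‖B‖ * C * ‖v k - vlim‖ := fun k =>
      (B.le_opNorm₂ _ _).trans <| by gcongr; exact hbdd k
    refine squeeze_zero_norm hbound ?_
    simpa using (tendsto_iff_norm_sub_tendsto_zero.mp hv).const_mul (‖B‖ * C)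
  simpa using hfixed.add hsmall

theorem LinearMap.apply_add_apply_sub_le_of_nonneg {R M : Type*} [CommRing R] [LinearOrder R]
    [IsOrderedRing R] [AddCommGroup M] [Module R M] (a : M →ₗ[R] M →ₗ[R] R)
    (ha : ∀ u, 0 ≤ a u u) (x z : M) : a x z + a z x - a z z ≤ a x x := by
  have := ha (x - z)
  simp only [map_sub, LinearMap.sub_apply] at this
  linear_combination this

theorem minty_passage_to_limit_general
    {V : Type*} [NormedAddCommGroup V] [InnerProductSpace ℝ V] [CompleteSpace V]
    (a : V →ₗ[ℝ] V →ₗ[ℝ] ℝ)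
    (M : ℝ) (hcont : ∀ u v : V, |a u v| ≤ M * ‖u‖ * ‖v‖)
    (m : ℝ) (hm : 0 < m) (hcoer : ∀ u : V, a u u ≥ m * ‖u‖ ^ 2)
    (f : V) (y : ℕ → V) (ylim : V) (v : ℕ → V) (vlim : V)
    (hweak : ∀ z : V, Tendsto (fun k => (inner ℝ (y k) z : ℝ)) atTop (nhds (inner ℝ ylim z : ℝ)))
    (hstrong : Tendsto (fun k => ‖v k - vlim‖) atTop (nhds 0))
    (hineq : ∀ k, a (y k) (v k - y k) ≥ (inner ℝ f (v k - y k) : ℝ)) :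
    a ylim (vlim - ylim) ≥ (inner ℝ f (vlim - ylim) : ℝ) := by
  let B := a.mkContinuous₂ M hcont
  have hdual := tendsto_dual_of_forall_tendsto_inner hweak
  obtain ⟨C, hC⟩ := exists_norm_le_of_forall_tendsto_dual hdual
  have hv : Tendsto v atTop (𝓝 vlim) := tendsto_iff_norm_sub_tendsto_zero.mpr hstrong
  have hnonneg : ∀ u, 0 ≤ a u u := fun u => (hcoer u).trans' (by positivity)
  have hupper : Tendsto (fun k => a (y k) (v k)) atTop (𝓝 (a ylim vlim)) :=
    B.tendsto_apply₂_of_weak_of_strong hdual hC hv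
  have hlower : Tendsto (fun k => a (y k) ylim + a ylim (y k) - a ylim ylim
      + inner ℝ f (v k - y k)) atTop (𝓝 (a ylim ylim + inner ℝ f (vlim - ylim))) := by
    have hf : Tendsto (fun k => inner ℝ f (v k) - inner ℝ f (y k)) atTop
        (𝓝 (inner ℝ f vlim - inner ℝ f ylim)) :=
      (tendsto_const_nhds.inner hv).sub (hdual (innerSL ℝ f))
    have := (((hdual (B.flip ylim)).add (hdual (B ylim))).sub_const (a ylim ylim)).add hf
    simpa only [inner_sub_right, add_sub_cancel_right, innerSL_apply_apply, B,
      ContinuousLinearMap.flip_apply, LinearMap.mkContinuous₂_apply] using this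
  have hle : ∀ k, a (y k) ylim + a ylim (y k) - a ylim ylim + inner ℝ f (v k - y k)
      ≤ a (y k) (v k) := fun k => by
    have hquad := a.apply_add_apply_sub_le_of_nonneg hnonneg (y k) ylim
    have hk := hineq k
    simp only [map_sub] at hk
    linarith
  have hlim := le_of_tendsto_of_tendsto' hlower hupper hle
  rw [map_sub]
  linarith

/-- Abstract Minty-type passage to the limit in the variational inequality. -/
theorem minty_passage_to_limit
    {V : Type*} [NormedAddCommGroup V] [InnerProductSpace ℝ V] [CompleteSpace V]
    (a : V →ₗ[ℝ] V →ₗ[ℝ] ℝ)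
    (M : ℝ) (hM : 0 < M) (hcont : ∀ u v : V, |a u v| ≤ M * ‖u‖ * ‖v‖)
    (m : ℝ) (hm : 0 < m) (hcoer : ∀ u : V, a u u ≥ m * ‖u‖ ^ 2)
    (f : V) (y : ℕ → V) (ylim : V) (v : ℕ → V) (vlim : V)
    (hweak : ∀ z : V, Tendsto (fun k => (inner ℝ (y k) z : ℝ)) atTop (nhds (inner ℝ ylim z : ℝ)))
    (hstrong : Tendsto (fun k => ‖v k - vlim‖) atTop (nhds 0))
    (hineq : ∀ k, a (y k) (v k - y k) ≥ (inner ℝ f (v k - y k) : ℝ)) :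
    a ylim (vlim - ylim) ≥ (inner ℝ f (vlim - ylim) : ℝ) :=
  minty_passage_to_limit_general a M hcont m hm hcoer f y ylim v vlim hweak hstrong hineq
end
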